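/- Localization for the empirical norm: let H* be star-shaped with two seminorms ‖·‖_X and ‖·‖_E (both homogeneous). If there exists g ∈ H* with |‖g‖_X² − ‖g‖_E²| > (1/2)‖g‖_E² + u²/2, then sup_{h ∈ H*, ‖h‖_E ≤ u} |‖h‖_X² − ‖h‖_E²| > u²/2. -/
import Mathlib


/-- Localization for the empirical norm: if the star-shaped class `H*` with
homogeneous seminorms `‖·‖_X`, `‖·‖_E` contains some `g` with
`|‖g‖_X² − ‖g‖_E²| > (1/2)‖g‖_E² + u²/2`, then
`sup_{h ∈ H*, ‖h‖_E ≤ u} |‖h‖_X² − ‖h‖_E²| > u²/2`. -/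
theorem empirical_norm_localization {V : Type*} [AddCommGroup V] [Module ℝ V]
    (H : Set V) (hstar : ∀ g ∈ H, ∀ a : ℝ, 0 ≤ a → a ≤ 1 → a • g ∈ H)
    (nX nE : V → ℝ)
    (hXhom : ∀ c : ℝ, 0 ≤ c → ∀ g, nX (c • g) = c * nX g)
    (hEhom : ∀ c : ℝ, 0 ≤ c → ∀ g, nE (c • g) = c * nE g)
    (u : ℝ) (hu : 0 < u)
    (hbig : ∃ g ∈ H, (1 / 2) * (nE g) ^ 2 + u ^ 2 / 2 < |(nX g) ^ 2 - (nE g) ^ 2|) :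
    ∃ h ∈ H, nE h ≤ u ∧ u ^ 2 / 2 < |(nX h) ^ 2 - (nE h) ^ 2| := by
  obtain ⟨g, hg, hgbig⟩ := hbig
  by_cases hle : nE g ≤ u
  · refine ⟨g, hg, hle, ?_⟩
    nlinarith [sq_nonneg (nE g), abs_nonneg ((nX g) ^ 2 - (nE g) ^ 2)]
  · push_neg at hle
    have hEg : 0 < nE g := hu.trans hle
    set c : ℝ := u / nE g with hc
    have hc0 : 0 ≤ c := le_of_lt (div_pos hu hEg)
    have hc1 : c ≤ 1 := by
      rw [hc, div_le_one hEg]; exact le_of_lt hle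
    refine ⟨c • g, hstar g hg c hc0 hc1, ?_, ?_⟩
    · rw [hEhom c hc0, hc, div_mul_cancel₀ _ (ne_of_gt hEg)]
    · rw [hXhom c hc0, hEhom c hc0]
      have h1 : (c * nX g) ^ 2 - (c * nE g) ^ 2 = c ^ 2 * ((nX g) ^ 2 - (nE g) ^ 2) := by
        ring
      rw [h1, abs_mul, abs_of_nonneg (sq_nonneg c)]
      have hc2 : c ^ 2 * nE g ^ 2 = u ^ 2 := by
        rw [hc]; field_simp
      have hcp : 0 < c ^ 2 := pow_pos (div_pos hu hEg) 2
      nlinarith [mul_lt_mul_of_pos_left hgbig hcp]
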